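/- The Lobachevsky function attains its global maximum over all of ℝ at θ = π/6: for every real θ, Λ(θ) ≤ Λ(π/6). -/

import Mathlib

/-!
The integrand `log |2 sin t|` is `π`-periodic and its integral over a period vanishes
(since `∫₀^π log (sin t) dt = -π log 2`), so `Λ` is `π`-periodic and it suffices to take
`θ ∈ [π/6, 7π/6]`. There `Λ(π/6) - Λ(θ) = ∫_{π/6}^θ log |2 sin t| dt`, and the integrand is
nonnegative on `[π/6, 5π/6]` (where `2 sin t ≥ 1`) and nonpositive on `[5π/6, 7π/6]`; past
`5π/6` the integral is therefore at least the full-period integral `∫_{π/6}^{7π/6} = 0`.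
-/

open MeasureTheory Real

/-- The Lobachevsky function `Λ(θ) = -∫₀^θ log |2 sin t| dt`. -/
noncomputable def lobachevsky (θ : ℝ) : ℝ :=
  -∫ t in (0:ℝ)..θ, Real.log |2 * Real.sin t|

open Set Function

lemma periodic_log_abs_two_mul_sin : Periodic (fun t => log |2 * sin t|) π := fun t => by
  simp [sin_add_pi]

lemma intervalIntegrable_log_abs_two_mul_sin (a b : ℝ) :
    IntervalIntegrable (fun t => log |2 * sin t|) volume a b := by
  simp only [log_abs]
  exact MeromorphicOn.intervalIntegrable_log
    ((analyticOnNhd_const.mul analyticOnNhd_sin).meromorphicOn)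

lemma integral_log_abs_two_mul_sin_zero_pi : ∫ t in 0..π, log |2 * sin t| = 0 := by
  have hsplit : EqOn (fun t => log |2 * sin t|) (fun t => log 2 + log (sin t)) (Ioo 0 π) :=
    fun t ht => by
      simp only [log_abs]
      exact log_mul two_ne_zero (sin_pos_of_pos_of_lt_pi ht.1 ht.2).ne'
  rw [intervalIntegral.integral_congr_Ioo_of_le pi_pos.le hsplit,
    intervalIntegral.integral_add (g := fun t => log (sin t)) intervalIntegrable_const
      intervalIntegrable_log_sin,
    intervalIntegral.integral_const, integral_log_sin_zero_pi, sub_zero, smul_eq_mul]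
  ring

lemma integral_log_abs_two_mul_sin_add_pi (a : ℝ) : ∫ t in a..a + π, log |2 * sin t| = 0 := by
  rw [periodic_log_abs_two_mul_sin.intervalIntegral_add_eq a 0, zero_add,
    integral_log_abs_two_mul_sin_zero_pi]

lemma lobachevsky_sub_lobachevsky (a b : ℝ) :
    lobachevsky a - lobachevsky b = ∫ t in a..b, log |2 * sin t| := by
  rw [lobachevsky, lobachevsky, neg_sub_neg, intervalIntegral.integral_interval_sub_left
    (intervalIntegrable_log_abs_two_mul_sin 0 b) (intervalIntegrable_log_abs_two_mul_sin 0 a)]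

lemma lobachevsky_periodic : Periodic lobachevsky π := fun θ =>
  (sub_eq_zero.1 <| (lobachevsky_sub_lobachevsky _ _).trans
    (integral_log_abs_two_mul_sin_add_pi θ)).symm

lemma one_le_two_mul_sin {t : ℝ} (ht : t ∈ Icc (π / 6) (5 * π / 6)) : 1 ≤ 2 * sin t := by
  have h := cos_le_cos_of_nonneg_of_le_pi (abs_nonneg (t - π / 2)) (by linarith [pi_pos])
    (abs_le.2 ⟨by linarith [ht.1], by linarith [ht.2]⟩ : |t - π / 2| ≤ π / 3)
  rw [cos_abs, cos_pi_div_three, cos_sub_pi_div_two] at h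
  linarith

lemma abs_two_mul_sin_le_one {t : ℝ} (ht : t ∈ Icc (5 * π / 6) (7 * π / 6)) :
    |2 * sin t| ≤ 1 := by
  have hπ := pi_pos
  have hlo := sin_le_sin_of_le_of_le_pi_div_two (x := -(π / 6)) (y := t - π)
    (by linarith) (by linarith [ht.2]) (by linarith [ht.1])
  have hhi := sin_le_sin_of_le_of_le_pi_div_two (x := t - π) (y := π / 6)
    (by linarith [ht.1]) (by linarith) (by linarith [ht.2])
  rw [sin_neg, sin_pi_div_six, sin_sub_pi] at hlo
  rw [sin_pi_div_six, sin_sub_pi] at hhi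
  exact abs_le.2 ⟨by linarith, by linarith⟩

lemma integral_log_abs_two_mul_sin_nonneg {θ : ℝ} (hθ : θ ∈ Icc (π / 6) (π / 6 + π)) :
    0 ≤ ∫ t in π / 6..θ, log |2 * sin t| := by
  have hπ := pi_pos
  rcases le_total θ (5 * π / 6) with hθmid | hθtail
  · refine intervalIntegral.integral_nonneg hθ.1 fun t ht => log_nonneg ?_
    exact (one_le_two_mul_sin ⟨ht.1, ht.2.trans hθmid⟩).trans (le_abs_self _)
  · have htail : 0 ≤ ∫ t in θ..π / 6 + π, -log |2 * sin t| :=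
      intervalIntegral.integral_nonneg hθ.2 fun t ht => neg_nonneg.2 <|
        log_nonpos (abs_nonneg _) (abs_two_mul_sin_le_one ⟨hθtail.trans ht.1, by linarith [ht.2]⟩)
    rw [intervalIntegral.integral_neg] at htail
    have hperiod := intervalIntegral.integral_add_adjacent_intervals
      (intervalIntegrable_log_abs_two_mul_sin (π / 6) θ)
      (intervalIntegrable_log_abs_two_mul_sin θ (π / 6 + π))
    rw [integral_log_abs_two_mul_sin_add_pi] at hperiod
    linarith

/-- Λ attains its global maximum over ℝ at θ = π/6. -/
theorem lobachevsky_le_lobachevsky_pi_div_six (θ : ℝ) :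
    lobachevsky θ ≤ lobachevsky (Real.pi / 6) := by
  obtain ⟨θ', hθ', hθθ'⟩ := lobachevsky_periodic.exists_mem_Ico pi_pos θ (π / 6)
  rw [hθθ', ← sub_nonneg, lobachevsky_sub_lobachevsky]
  exact integral_log_abs_two_mul_sin_nonneg (Ico_subset_Icc_self hθ')
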